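/- arXiv:1701.01502 — 3 statements merged into one kernel-verified Lean document; each statement's English description precedes it below -/
import Mathlib

section
/- For every σ > 0, the function φ̄(r,t) := 2 arctan( r/(σ e^t) ) + π satisfies ∂ₜφ̄ + r ∂ᵣφ̄ − ∂ᵣᵣφ̄ − (1/r)∂ᵣφ̄ + sin(2φ̄)/(2r²) = 0 for all r > 0 and all t ∈ ℝ; that is, φ̄ is an exact solution of the axisymmetric drift harmonic map heat equation. -/
open Real MeasureTheory Set Filter Topology

/-- Partial derivative in the radial variable `r`. -/
noncomputable def pr (φ : ℝ → ℝ → ℝ) (r t : ℝ) : ℝ := deriv (fun s => φ s t) r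

/-- Second partial derivative in the radial variable `r`. -/
noncomputable def prr (φ : ℝ → ℝ → ℝ) (r t : ℝ) : ℝ :=
  deriv (fun s => deriv (fun s' => φ s' t) s) r

/-- Partial derivative in the time variable `t`. -/
noncomputable def pt (φ : ℝ → ℝ → ℝ) (r t : ℝ) : ℝ := deriv (fun s => φ r s) t

/-- The axisymmetric drift harmonic map heat equation
`∂ₜφ + r ∂ᵣφ = ∂ᵣᵣφ + (1/r)∂ᵣφ − sin(2φ)/(2r²)` at the point `(r,t)`. -/
def SolvesDriftHM (φ : ℝ → ℝ → ℝ) (r t : ℝ) : Prop :=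
  pt φ r t + r * pr φ r t =
    prr φ r t + (1 / r) * pr φ r t - Real.sin (2 * φ r t) / (2 * r ^ 2)

/-- The exact solution `φ̄(r,t) = 2 arctan(r/(σ e^t)) + π`. -/
noncomputable def phibar (σ : ℝ) (r t : ℝ) : ℝ :=
  2 * Real.arctan (r / (σ * Real.exp t)) + Real.pi

/-! Since `φ̄(r,t)` depends only on the self-similar variable `r e⁻ᵗ`, the drift term `r ∂ᵣφ̄`
cancels `∂ₜφ̄` exactly. What remains is the stationary equation
`∂ᵣᵣψ + (1/r) ∂ᵣψ = sin(2ψ)/(2r²)` for `ψ(r) = 2 arctan(r/a) + π` (a rescaled,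
shifted inverse stereographic projection), which is checked by direct computation. -/

theorem pt_add_mul_pr_of_selfSimilar (g : ℝ → ℝ) (σ r t : ℝ)
    (hg : DifferentiableAt ℝ g (r / (σ * exp t))) :
    pt (fun r t => g (r / (σ * exp t))) r t + r * pr (fun r t => g (r / (σ * exp t))) r t = 0 := by
  have hvar : (fun t => r / (σ * exp t)) = fun t => r / σ * exp (-t) := by
    funext t
    rw [exp_neg, div_mul_eq_div_div, div_eq_mul_inv]
  have hvar_deriv : HasDerivAt (fun t => r / (σ * exp t)) (r / σ * (exp (-t) * -1)) t := by
    rw [hvar]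
    exact ((hasDerivAt_neg t).exp).const_mul (r / σ)
  have hdt : HasDerivAt (fun t => g (r / (σ * exp t))) _ t := hg.hasDerivAt.comp t hvar_deriv
  have hdr : HasDerivAt (fun s => g (s / (σ * exp t))) _ r :=
    hg.hasDerivAt.comp r ((hasDerivAt_id' r).div_const (σ * exp t))
  rw [pt, pr, hdt.deriv, hdr.deriv, exp_neg]
  ring

theorem hasDerivAt_two_mul_arctan_div_add_pi {a : ℝ} (ha : a ≠ 0) (s : ℝ) :
    HasDerivAt (fun s => 2 * arctan (s / a) + π) (2 * a / (a ^ 2 + s ^ 2)) s := by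
  have h := (((hasDerivAt_id' s).div_const a).arctan.const_mul 2).add_const π
  refine h.congr_deriv ?_
  have : a ^ 2 + s ^ 2 ≠ 0 := by positivity
  field_simp

theorem hasDerivAt_two_mul_div_sq_add_sq {a : ℝ} (ha : a ≠ 0) (s : ℝ) :
    HasDerivAt (fun s => 2 * a / (a ^ 2 + s ^ 2)) (-(4 * a * s) / (a ^ 2 + s ^ 2) ^ 2) s := by
  have h := (hasDerivAt_const s (2 * a)).div ((hasDerivAt_pow 2 s).const_add (a ^ 2))
    (by positivity)
  refine h.congr_deriv ?_
  ring

theorem sin_four_mul_arctan (x : ℝ) :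
    sin (4 * arctan x) = 4 * x * (1 - x ^ 2) / (1 + x ^ 2) ^ 2 := by
  have hsq : √(1 + x ^ 2) ^ 2 = 1 + x ^ 2 := sq_sqrt (by positivity)
  rw [show 4 * arctan x = 2 * (2 * arctan x) by ring, sin_two_mul, sin_two_mul, cos_two_mul,
    sin_arctan, cos_arctan]
  field_simp
  rw [show √(1 + x ^ 2) ^ 4 = (√(1 + x ^ 2) ^ 2) ^ 2 by ring, hsq]
  ring

theorem two_mul_arctan_div_add_pi_harmonicMap {a r : ℝ} (ha : a ≠ 0) (hr : r ≠ 0) :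
    deriv (deriv fun s => 2 * arctan (s / a) + π) r
        + (1 / r) * deriv (fun s => 2 * arctan (s / a) + π) r
      = sin (2 * (2 * arctan (r / a) + π)) / (2 * r ^ 2) := by
  have hderiv : deriv (fun s => 2 * arctan (s / a) + π) = fun s => 2 * a / (a ^ 2 + s ^ 2) :=
    funext fun s => (hasDerivAt_two_mul_arctan_div_add_pi ha s).deriv
  rw [hderiv, (hasDerivAt_two_mul_div_sq_add_sq ha r).deriv,
    show 2 * (2 * arctan (r / a) + π) = 4 * arctan (r / a) + 2 * π by ring,
    sin_add_two_pi, sin_four_mul_arctan]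
  have : a ^ 2 + r ^ 2 ≠ 0 := by positivity
  field_simp
  ring

/-- For every `σ > 0`, the function `φ̄(r,t) = 2 arctan(r/(σ e^t)) + π` is an exact solution
of the axisymmetric drift harmonic map heat equation for all `r > 0` and `t ∈ ℝ`. -/
theorem phibar_exact_solution (σ : ℝ) (hσ : 0 < σ) (r t : ℝ) (hr : 0 < r) :
    pt (phibar σ) r t + r * pr (phibar σ) r t - prr (phibar σ) r t
      - (1 / r) * pr (phibar σ) r t
      + Real.sin (2 * phibar σ r t) / (2 * r ^ 2) = 0 := by
  have hdrift : pt (phibar σ) r t + r * pr (phibar σ) r t = 0 :=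
    pt_add_mul_pr_of_selfSimilar (fun x => 2 * arctan x + π) σ r t
      ((differentiable_arctan.const_mul 2).add_const π _)
  have hstationary : prr (phibar σ) r t + (1 / r) * pr (phibar σ) r t
      = sin (2 * phibar σ r t) / (2 * r ^ 2) :=
    two_mul_arctan_div_add_pi_harmonicMap (a := σ * exp t) (by positivity) hr.ne'
  linear_combination hdrift - hstationary
end

section
/- Let R > 0 and let f be continuous on [0,R] and continuously differentiable on (0,R] with f(0) = 0 and f(R) = α, and suppose the energy ∫₀^R ( f'(r)² + sin²(f(r))/r² ) r dr is finite. Then ∫₀^R ( f'(r)² + sin²(f(r))/r² ) r dr ≥ 2(1 − cos α). -/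
open Real MeasureTheory Set

/-!
Since `d/dr (-2 cos f) = 2 f' sin f` and, by AM–GM, `2 f' sin f ≤ (f'² + sin² f / r²) r`,
the energy dominates the total variation of `-2 cos f`, which is `2 (1 - cos α)`.
-/

lemma two_mul_mul_le_energy_density (a s : ℝ) {r : ℝ} (hr : 0 < r) :
    2 * a * s ≤ (a ^ 2 + s ^ 2 / r ^ 2) * r := by
  have hsq : (a ^ 2 + s ^ 2 / r ^ 2) * r - 2 * a * s = (a * r - s) ^ 2 / r := by
    field_simp
    ring
  have := div_nonneg (sq_nonneg (a * r - s)) hr.le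
  linarith

theorem two_mul_sub_cos_le_integral_energy {f f' : ℝ → ℝ} {a b : ℝ} (ha : 0 ≤ a) (hab : a ≤ b)
    (hcont : ContinuousOn f (Icc a b)) (hderiv : ∀ r ∈ Ioo a b, HasDerivAt f (f' r) r)
    (hfin : IntegrableOn (fun r => (f' r ^ 2 + sin (f r) ^ 2 / r ^ 2) * r) (Ioo a b)) :
    2 * (cos (f a) - cos (f b)) ≤ ∫ r in Ioo a b, (f' r ^ 2 + sin (f r) ^ 2 / r ^ 2) * r := by
  have hcos : ContinuousOn (fun r => -2 * cos (f r)) (Icc a b) :=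
    continuousOn_const.mul (continuous_cos.comp_continuousOn hcont)
  have hcos_deriv : ∀ r ∈ Ioo a b,
      HasDerivWithinAt (fun r => -2 * cos (f r)) (2 * f' r * sin (f r)) (Ioi r) r := fun r hr =>
    (((hderiv r hr).cos.const_mul (-2)).congr_deriv (by ring)).hasDerivWithinAt
  -- This form of FTC bounds the increment of `-2 cos f` by the integral of any integrable
  -- majorant of its derivative, so `2 f' sin f` itself need not be known to be integrable.
  have key := intervalIntegral.sub_le_integral_of_hasDeriv_right_of_le hab hcos hcos_deriv
    ((integrableOn_Icc_iff_integrableOn_Ioo).mpr hfin)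
    (fun r hr => two_mul_mul_le_energy_density _ _ (ha.trans_lt hr.1))
  rw [intervalIntegral.integral_of_le hab, integral_Ioc_eq_integral_Ioo] at key
  linarith

theorem energy_lower_bound_general (R α : ℝ) (hR : 0 < R) (f f' : ℝ → ℝ)
    (hcont : ContinuousOn f (Set.Icc 0 R))
    (hderiv : ∀ r ∈ Set.Ioc (0:ℝ) R, HasDerivWithinAt f (f' r) (Set.Ioc (0:ℝ) R) r)
    (h0 : f 0 = 0) (hRα : f R = α)
    (hfin : IntegrableOn (fun r => (f' r ^ 2 + Real.sin (f r) ^ 2 / r ^ 2) * r)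
      (Set.Ioo (0:ℝ) R)) :
    2 * (1 - Real.cos α)
      ≤ ∫ r in Set.Ioo (0:ℝ) R, (f' r ^ 2 + Real.sin (f r) ^ 2 / r ^ 2) * r := by
  have hderiv_Ioo : ∀ r ∈ Ioo 0 R, HasDerivAt f (f' r) r := fun r hr =>
    (hderiv r (Ioo_subset_Ioc_self hr)).hasDerivAt (Ioc_mem_nhds hr.1 hr.2)
  simpa [h0, hRα] using
    two_mul_sub_cos_le_integral_energy le_rfl hR.le hcont hderiv_Ioo hfin

/-- Lower energy bound: if `f` is continuous on `[0,R]`, continuously differentiable on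
`(0,R]`, with `f(0) = 0`, `f(R) = α` and finite axisymmetric energy, then
`∫₀^R (f'² + sin²f/r²) r dr ≥ 2(1 − cos α)`. -/
theorem energy_lower_bound (R α : ℝ) (hR : 0 < R) (f f' : ℝ → ℝ)
    (hcont : ContinuousOn f (Set.Icc 0 R))
    (hderiv : ∀ r ∈ Set.Ioc (0:ℝ) R, HasDerivWithinAt f (f' r) (Set.Ioc (0:ℝ) R) r)
    (hcont' : ContinuousOn f' (Set.Ioc (0:ℝ) R))
    (h0 : f 0 = 0) (hRα : f R = α)
    (hfin : IntegrableOn (fun r => (f' r ^ 2 + Real.sin (f r) ^ 2 / r ^ 2) * r)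
      (Set.Ioo (0:ℝ) R)) :
    2 * (1 - Real.cos α)
      ≤ ∫ r in Set.Ioo (0:ℝ) R, (f' r ^ 2 + Real.sin (f r) ^ 2 / r ^ 2) * r :=
  energy_lower_bound_general R α hR f f' hcont hderiv h0 hRα hfin
end

section
/- For every ε ∈ (0,1) there exist constants μ₀ > 0 and, for each μ ≥ μ₀, a constant δ₀ = δ₀(ε,μ) > 0 such that for every 0 < δ ≤ δ₀ the function ψ(r,t) := 2 arctan( r/(e^t λ̄(t)) ) − 2 arctan( r^{1+ε}/(e^{(1+ε)t} μ) ), where λ̄(t) := ( (δ(1−ε)/2)(1 − e^{−2t}) )^{1/(1−ε)}, satisfies the supersolution inequality ∂ᵣᵣψ + (1/r)∂ᵣψ − sin(2ψ)/(2r²) − r ∂ᵣψ − ∂ₜψ ≤ 0 for all r ∈ (0,1) and t > 0. -/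
/-!
Write `ψ = u - v` with `u = 2 arctan (r / P)`, `P = eᵗ λ̄`, and `v = 2 arctan y`,
`y = r^{1+ε} / (e^{(1+ε)t} μ)`. A profile `w = 2 arctan (r^k / c)` satisfies `r ∂ᵣw = k sin w`, so
`∂ᵣᵣw + ∂ᵣw / r = k² sin (2w) / (2r²)`: `u` is a harmonic map and `v` carries the extra term
`ε(2+ε) sin (2v) / (2r²)`. As `e^{(1+ε)t} μ` grows at exactly the self-similar rate, the drift and
time derivatives of `v` cancel, while those of `u` leave `(λ̄'/λ̄) sin u`. Hence the residual is
`(sin 2u - (1+ε)² sin 2v - sin 2(u-v)) / (2r²) + (λ̄'/λ̄) sin u`. Its numerator equals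
`-ε(2+ε) sin 2v - 4 sin u sin v sin (u-v) ≤ -ε(2+ε) y / 2` as soon as `y ≤ ε(2+ε) / 16`, which
`μ ≥ 16 / (ε(2+ε))` guarantees for `r < 1`; by self-similarity the drift term is at most
`2δμ y / r²`, and it is absorbed once `δ ≤ ε(2+ε) / (8μ)`.
-/

open Real MeasureTheory Set Filter Topology

/-- The solution `λ̄(t) = ((δ(1−ε)/2)(1 − e^{−2t}))^{1/(1−ε)}` of `λ̄' = δ e^{−2t} λ̄^ε`,
`λ̄(0) = 0`. -/
noncomputable def lamBar (δ ε : ℝ) (t : ℝ) : ℝ :=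
  (δ * (1 - ε) / 2 * (1 - Real.exp (-2 * t))) ^ (1 / (1 - ε))

/-- The supersolution candidate
`ψ(r,t) = 2 arctan(r/(e^t λ̄(t))) − 2 arctan(r^{1+ε}/(e^{(1+ε)t} μ))`. -/
noncomputable def psiSuper (δ ε μ : ℝ) (r t : ℝ) : ℝ :=
  2 * Real.arctan (r / (Real.exp t * lamBar δ ε t))
    - 2 * Real.arctan (r ^ (1 + ε) / (Real.exp ((1 + ε) * t) * μ))

theorem sin_two_mul_arctan (y : ℝ) : sin (2 * arctan y) = 2 * y / (1 + y ^ 2) := by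
  have h : √(1 + y ^ 2) ^ 2 = 1 + y ^ 2 := sq_sqrt (by positivity)
  rw [sin_two_mul, sin_arctan, cos_arctan]
  field_simp
  rw [h]

theorem cos_two_mul_arctan (y : ℝ) : cos (2 * arctan y) = (1 - y ^ 2) / (1 + y ^ 2) := by
  have h : √(1 + y ^ 2) ^ 2 = 1 + y ^ 2 := sq_sqrt (by positivity)
  rw [cos_two_mul, cos_arctan, div_pow, h]
  field_simp
  ring

theorem HasDerivAt.two_mul_arctan_of_eq_mul {f : ℝ → ℝ} {a x : ℝ}
    (hf : HasDerivAt f (a * f x) x) :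
    HasDerivAt (fun x => 2 * Real.arctan (f x)) (a * Real.sin (2 * Real.arctan (f x))) x :=
  (hf.arctan.const_mul 2).congr_deriv <| by
    rw [sin_two_mul_arctan]
    ring

theorem hasDerivAt_two_mul_arctan_rpow_div (k c : ℝ) {r : ℝ} (hr : 0 < r) :
    HasDerivAt (fun s => 2 * arctan (s ^ k / c)) (k / r * sin (2 * arctan (r ^ k / c))) r :=
  HasDerivAt.two_mul_arctan_of_eq_mul <|
    ((hasDerivAt_rpow_const (p := k) (Or.inl hr.ne')).div_const c).congr_deriv <| by
      rw [rpow_sub_one hr.ne']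
      ring

theorem HasDerivAt.two_mul_arctan_const_div {P : ℝ → ℝ} {P' t : ℝ} (c : ℝ)
    (hP : HasDerivAt P P' t) (hPt : P t ≠ 0) :
    HasDerivAt (fun t => 2 * Real.arctan (c / P t))
      (-(P' / P t) * Real.sin (2 * Real.arctan (c / P t))) t :=
  HasDerivAt.two_mul_arctan_of_eq_mul <| ((hasDerivAt_const t c).fun_div hP hPt).congr_deriv <| by
    field_simp
    ring

theorem HasDerivAt.const_div_mul_sin {w : ℝ → ℝ} {k r : ℝ} (hr : 0 < r)
    (hw : HasDerivAt w (k / r * Real.sin (w r)) r) :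
    HasDerivAt (fun s => k / s * Real.sin (w s))
      ((k ^ 2 * Real.sin (2 * w r) / 2 - k * Real.sin (w r)) / r ^ 2) r :=
  (((hasDerivAt_const r k).fun_div (hasDerivAt_id' r) hr.ne').fun_mul hw.sin).congr_deriv <| by
    rw [Real.sin_two_mul]
    field_simp
    ring

theorem lamBar_pos {δ ε t : ℝ} (hδ : 0 < δ) (hε : ε < 1) (ht : 0 < t) : 0 < lamBar δ ε t := by
  have : exp (-2 * t) < 1 := exp_lt_one_iff.mpr (by linarith)
  unfold lamBar
  apply rpow_pos_of_pos
  nlinarith [mul_pos hδ (sub_pos.mpr hε)]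

theorem hasDerivAt_lamBar {δ ε t : ℝ} (hδ : 0 ≤ δ) (hε : ε ∈ Ico 0 1) (ht : 0 ≤ t) :
    HasDerivAt (lamBar δ ε) (δ * exp (-2 * t) * lamBar δ ε t ^ ε) t := by
  obtain ⟨hε0, hε1⟩ := hε
  have h1ε : 0 < 1 - ε := sub_pos.mpr hε1
  set base := δ * (1 - ε) / 2 * (1 - exp (-2 * t))
  have hbase : 0 ≤ base := by
    have : exp (-2 * t) ≤ 1 := exp_le_one_iff.mpr (by linarith)
    exact mul_nonneg (by positivity) (sub_nonneg.mpr this)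
  have hp : 1 ≤ 1 / (1 - ε) := by rw [le_div_iff₀ h1ε]; linarith
  have hinner : HasDerivAt (fun s => δ * (1 - ε) / 2 * (1 - exp (-2 * s)))
      (δ * (1 - ε) / 2 * (0 - exp (-2 * t) * (-2 * 1))) t :=
    ((hasDerivAt_const t 1).sub ((hasDerivAt_id t).const_mul (-2)).exp).const_mul _
  refine ((hasDerivAt_rpow_const (x := base) (Or.inr hp)).comp t hinner).congr_deriv ?_
  have hexp : 1 / (1 - ε) - 1 = 1 / (1 - ε) * ε := by field_simp; ring
  rw [hexp, rpow_mul hbase, show lamBar δ ε t = base ^ (1 / (1 - ε)) from rfl]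
  field_simp
  ring

/-- `φ` is a supersolution of the drift harmonic map heat equation where this is `≤ 0`. -/
noncomputable def driftHMResidual (φ : ℝ → ℝ → ℝ) (r t : ℝ) : ℝ :=
  prr φ r t + (1 / r) * pr φ r t - sin (2 * φ r t) / (2 * r ^ 2) - r * pr φ r t - pt φ r t

theorem driftHMResidual_bubble_sub_bubble {P M : ℝ → ℝ} {k p m r t : ℝ} (hr : 0 < r)
    (hP : HasDerivAt P (p * P t) t) (hM : HasDerivAt M (m * M t) t) (hP0 : P t ≠ 0)
    (hM0 : M t ≠ 0) :
    driftHMResidual (fun r t => 2 * arctan (r / P t) - 2 * arctan (r ^ k / M t)) r t =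
      (sin (2 * (2 * arctan (r / P t))) - k ^ 2 * sin (2 * (2 * arctan (r ^ k / M t)))
          - sin (2 * (2 * arctan (r / P t) - 2 * arctan (r ^ k / M t)))) / (2 * r ^ 2)
        + (p - 1) * sin (2 * arctan (r / P t)) + (k - m) * sin (2 * arctan (r ^ k / M t)) := by
  have hu : ∀ s > 0, HasDerivAt (fun x => 2 * arctan (x / P t))
      (1 / s * sin (2 * arctan (s / P t))) s := fun s hs => by
    simpa only [rpow_one] using hasDerivAt_two_mul_arctan_rpow_div 1 (P t) hs
  have hv : ∀ s > 0, HasDerivAt (fun x => 2 * arctan (x ^ k / M t))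
      (k / s * sin (2 * arctan (s ^ k / M t))) s := fun s hs =>
    hasDerivAt_two_mul_arctan_rpow_div k (M t) hs
  have hpr : ∀ s > 0, HasDerivAt (fun x => 2 * arctan (x / P t) - 2 * arctan (x ^ k / M t))
      (1 / s * sin (2 * arctan (s / P t)) - k / s * sin (2 * arctan (s ^ k / M t))) s :=
    fun s hs => (hu s hs).fun_sub (hv s hs)
  have hprr : HasDerivAt
      (fun s => deriv (fun x => 2 * arctan (x / P t) - 2 * arctan (x ^ k / M t)) s) _ r :=
    ((hu r hr).const_div_mul_sin hr).fun_sub ((hv r hr).const_div_mul_sin hr)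
      |>.congr_of_eventuallyEq <| by
        filter_upwards [Ioi_mem_nhds hr] with s hs using (hpr s hs).deriv
  have hpt := (hP.two_mul_arctan_const_div r hP0).fun_sub
    (hM.two_mul_arctan_const_div (r ^ k) hM0)
  unfold driftHMResidual pr prr pt
  rw [hprr.deriv, (hpr r hr).deriv, hpt.deriv]
  field_simp
  ring

theorem driftHMResidual_psiSuper {δ ε μ r t : ℝ} (hδ : 0 < δ) (hε : ε ∈ Ioo 0 1) (hμ : μ ≠ 0)
    (hr : 0 < r) (ht : 0 < t) :
    driftHMResidual (psiSuper δ ε μ) r t =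
      (sin (2 * (2 * arctan (r / (exp t * lamBar δ ε t))))
        - (1 + ε) ^ 2 * sin (2 * (2 * arctan (r ^ (1 + ε) / (exp ((1 + ε) * t) * μ))))
        - sin (2 * (2 * arctan (r / (exp t * lamBar δ ε t))
            - 2 * arctan (r ^ (1 + ε) / (exp ((1 + ε) * t) * μ))))) / (2 * r ^ 2)
      + δ * (exp (-2 * t) * lamBar δ ε t ^ ε / lamBar δ ε t)
        * sin (2 * arctan (r / (exp t * lamBar δ ε t))) := by
  have hL := lamBar_pos hδ hε.2 ht
  have hP : HasDerivAt (fun s => exp s * lamBar δ ε s)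
      ((1 + δ * (exp (-2 * t) * lamBar δ ε t ^ ε / lamBar δ ε t)) * (exp t * lamBar δ ε t)) t :=
    ((hasDerivAt_exp t).mul (hasDerivAt_lamBar hδ.le (Ioo_subset_Ico_self hε) ht.le))
      |>.congr_deriv (by field_simp)
  have hM : HasDerivAt (fun s => exp ((1 + ε) * s) * μ) ((1 + ε) * (exp ((1 + ε) * t) * μ)) t :=
    (((hasDerivAt_id' t).const_mul (1 + ε)).exp.mul_const μ).congr_deriv (by ring)
  refine (driftHMResidual_bubble_sub_bubble (k := 1 + ε) hr hP hM (by positivity)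
    (by positivity)).trans ?_
  ring

theorem sin_two_mul_sub_sq_mul_sin_two_mul_sub_sin_le {k y : ℝ} (u : ℝ) (hy : 0 ≤ y)
    (hyk : 16 * y ≤ k ^ 2 - 1) (hk : k ^ 2 ≤ 4) :
    sin (2 * u) - k ^ 2 * sin (2 * (2 * arctan y)) - sin (2 * (u - 2 * arctan y))
      ≤ -((k ^ 2 - 1) * y / 2) := by
  set v := 2 * arctan y
  have hsin : sin v = 2 * y / (1 + y ^ 2) := sin_two_mul_arctan y
  have hcos : cos v = (1 - y ^ 2) / (1 + y ^ 2) := cos_two_mul_arctan y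
  have hsin_lo : y ≤ sin v := by
    rw [hsin, le_div_iff₀ (by positivity)]
    nlinarith
  have hsin_hi : sin v ≤ 2 * y := by
    rw [hsin, div_le_iff₀ (by positivity)]
    nlinarith
  have hcos_lo : 1 / 2 ≤ cos v := by
    rw [hcos, le_div_iff₀ (by positivity)]
    nlinarith
  have hexpand : sin (2 * u) - k ^ 2 * sin (2 * v) - sin (2 * (u - v))
      = 2 * sin v ^ 2 * sin (2 * u) - 2 * (k ^ 2 - 1) * sin v * cos v
        - 4 * sin v * cos v * sin u ^ 2 := by
    rw [show 2 * (u - v) = 2 * u - 2 * v by ring, sin_sub, sin_two_mul v, cos_two_mul v,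
      cos_two_mul u, cos_sq' u]
    linear_combination (-2 * sin (2 * u)) * sin_sq_add_cos_sq v
  have hgap : (k ^ 2 - 1) / 4 ≤ (k ^ 2 - 1) * cos v - sin v := by nlinarith
  have hmain : (k ^ 2 - 1) * y / 4 ≤ sin v * ((k ^ 2 - 1) * cos v - sin v) := by
    nlinarith [mul_le_mul hsin_lo hgap (by linarith) (hy.trans hsin_lo)]
  have hdrop : 0 ≤ sin v * cos v * sin u ^ 2 :=
    mul_nonneg (mul_nonneg (hy.trans hsin_lo) (by linarith)) (sq_nonneg _)
  rw [hexpand]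
  nlinarith [mul_le_mul_of_nonneg_left (sin_le_one (2 * u)) (sq_nonneg (sin v))]

theorem rpow_mul_sin_two_mul_arctan_le {x p : ℝ} (hx : 0 < x) (hp : p ∈ Icc (-1) 1) :
    x ^ p * sin (2 * arctan x) ≤ 2 := by
  have hpow : x ^ p * x ≤ 1 + x ^ 2 := by
    rw [← rpow_add_one hx.ne']
    rcases le_total x 1 with hx1 | hx1
    · linarith [rpow_le_one hx.le hx1 (by linarith [hp.1] : 0 ≤ p + 1), sq_nonneg x]
    · have := rpow_le_rpow_of_exponent_le hx1 (by linarith [hp.2] : p + 1 ≤ 2)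
      norm_cast at this
      linarith
  rw [sin_two_mul_arctan, mul_div_assoc', div_le_iff₀ (by positivity)]
  linarith

theorem sq_mul_exp_mul_rpow_div_eq {r ℓ : ℝ} (ε t : ℝ) (hr : 0 < r) (hℓ : 0 < ℓ) :
    r ^ 2 * (exp (-2 * t) * ℓ ^ ε / ℓ)
      = r ^ (1 + ε) / exp ((1 + ε) * t) * (r / (exp t * ℓ)) ^ (1 - ε) := by
  have hr2 : r ^ (1 + ε) * r ^ (1 - ε) = r ^ 2 := by
    rw [← rpow_add hr, show 1 + ε + (1 - ε) = (2 : ℕ) by ring, rpow_natCast]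
  rw [div_rpow hr.le (by positivity), mul_rpow (exp_pos t).le hℓ.le, ← exp_mul,
    rpow_sub hℓ, rpow_one, ← hr2]
  field_simp
  rw [← exp_add, ← exp_add, exp_eq_one_iff]
  ring

theorem sq_mul_exp_mul_rpow_div_mul_sin_le {r ℓ ε : ℝ} (t : ℝ) (hr : 0 < r) (hℓ : 0 < ℓ)
    (hε : ε ∈ Icc 0 2) :
    r ^ 2 * (exp (-2 * t) * ℓ ^ ε / ℓ) * sin (2 * arctan (r / (exp t * ℓ)))
      ≤ 2 * (r ^ (1 + ε) / exp ((1 + ε) * t)) := by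
  have hsin := rpow_mul_sin_two_mul_arctan_le (x := r / (exp t * ℓ)) (p := 1 - ε)
    (by positivity) ⟨by linarith [hε.2], by linarith [hε.1]⟩
  rw [sq_mul_exp_mul_rpow_div_eq ε t hr hℓ, mul_assoc]
  linarith [mul_le_mul_of_nonneg_left hsin
    (by positivity : (0 : ℝ) ≤ r ^ (1 + ε) / exp ((1 + ε) * t))]

theorem driftHMResidual_psiSuper_nonpos {δ ε μ r t : ℝ} (hδ : 0 < δ) (hε : ε ∈ Ioo 0 1)
    (hμ : 16 ≤ ε * (2 + ε) * μ) (hδμ : 8 * δ * μ ≤ ε * (2 + ε)) (hr : r ∈ Ioo 0 1)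
    (ht : 0 < t) : driftHMResidual (psiSuper δ ε μ) r t ≤ 0 := by
  obtain ⟨hε0, hε1⟩ := hε
  obtain ⟨hr0, hr1⟩ := hr
  have hμ0 : 0 < μ := pos_of_mul_pos_right (a := ε * (2 + ε)) (by linarith) (by positivity)
  set y := r ^ (1 + ε) / (exp ((1 + ε) * t) * μ)
  have hy0 : 0 ≤ y := by positivity
  have hyμ : y * μ ≤ 1 := by
    have hr1 : r ^ (1 + ε) ≤ 1 := rpow_le_one hr0.le hr1.le (by linarith)
    have he1 : 1 ≤ exp ((1 + ε) * t) := one_le_exp (by positivity)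
    rw [div_mul_eq_mul_div, div_le_one (by positivity)]
    nlinarith
  have hinteraction := sin_two_mul_sub_sq_mul_sin_two_mul_sub_sin_le (k := 1 + ε)
    (2 * arctan (r / (exp t * lamBar δ ε t))) hy0 (by nlinarith) (by nlinarith)
  have hdrift := sq_mul_exp_mul_rpow_div_mul_sin_le t hr0 (lamBar_pos hδ hε1 ht)
    ⟨hε0.le, by linarith⟩
  have hyr : r ^ (1 + ε) / exp ((1 + ε) * t) = μ * y := by
    simp only [y]
    field_simp
  rw [driftHMResidual_psiSuper hδ ⟨hε0, hε1⟩ hμ0.ne' hr0 ht, div_add' _ _ _ (by positivity)]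
  refine div_nonpos_of_nonpos_of_nonneg ?_ (by positivity)
  rw [hyr] at hdrift
  nlinarith

/-- Lemma 4.1(iii): for every `ε ∈ (0,1)` there exist `μ₀ > 0` and, for each `μ ≥ μ₀`, a
`δ₀ > 0` such that for all `0 < δ ≤ δ₀` the function `ψ` is a supersolution of the
axisymmetric drift harmonic map heat equation on `(0,1) × (0,∞)`. -/
theorem psi_is_supersolution :
    ∀ ε ∈ Set.Ioo (0:ℝ) 1, ∃ μ₀ > (0:ℝ), ∀ μ ≥ μ₀, ∃ δ₀ > (0:ℝ),
      ∀ δ : ℝ, 0 < δ → δ ≤ δ₀ →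
        ∀ r ∈ Set.Ioo (0:ℝ) 1, ∀ t > (0:ℝ),
          prr (psiSuper δ ε μ) r t + (1 / r) * pr (psiSuper δ ε μ) r t
            - Real.sin (2 * psiSuper δ ε μ r t) / (2 * r ^ 2)
            - r * pr (psiSuper δ ε μ) r t - pt (psiSuper δ ε μ) r t ≤ 0 := by
  intro ε hε
  have ha : 0 < ε * (2 + ε) := by nlinarith [hε.1]
  refine ⟨16 / (ε * (2 + ε)), by positivity, fun μ hμ => ?_⟩
  have hμ0 : 0 < μ := lt_of_lt_of_le (by positivity) hμ
  refine ⟨ε * (2 + ε) / (8 * μ), by positivity, fun δ hδ hδδ₀ r hr t ht => ?_⟩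
  rw [ge_iff_le, div_le_iff₀ ha, mul_comm] at hμ
  rw [le_div_iff₀ (by positivity)] at hδδ₀
  exact driftHMResidual_psiSuper_nonpos hδ hε hμ (by linarith) hr ht
end
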